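/- On ℝ^{1,n-1} with metric g of Lorentzian signature in a basis e₀,...,e_{n-1} with g = dual pairing making g(e₀,e_{n-1})=1, g(e_i,e_j)=δ_{ij} for 1 ≤ i,j ≤ n-2, the tensor φ = −(n-3)·(ω¹∧ω^{n-1})⊙(ω¹∧ω^{n-1}) + Σ_{i=2}^{n-2} (ωⁱ∧ω^{n-1})⊙(ωⁱ∧ω^{n-1}) is a nonzero algebraic Weyl tensor (satisfies the Riemann symmetries and is totally trace-free) for every n ≥ 4. -/
import Mathlib


/-- Kronecker delta, as a real number. -/
def kdelta (i a : ℕ) : ℝ := if i = a then 1 else 0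

/-- The component `(a,b,c,d)` of the `(4,0)`-tensor `(ωⁱ ∧ ωʲ) ⊙ (ωⁱ ∧ ωʲ)`, the symmetric
square of the 2-form `ωⁱ ∧ ωʲ` built from dual basis covectors. -/
def wedgeSq (i j a b c d : ℕ) : ℝ :=
  (kdelta i a * kdelta j b - kdelta i b * kdelta j a) *
  (kdelta i c * kdelta j d - kdelta i d * kdelta j c)

/-- The Lorentzian metric on `ℝ^{1,n-1}` in the basis `e₀, …, e_{n-1}`:
`g(e₀, e_{n-1}) = g(e_{n-1}, e₀) = 1`, `g(e_i, e_j) = δ_{ij}` for `1 ≤ i, j ≤ n-2`. -/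
def gLor (n i j : ℕ) : ℝ :=
  if (i = 0 ∧ j = n - 1) ∨ (i = n - 1 ∧ j = 0) then 1
  else if i = j ∧ 1 ≤ i ∧ i ≤ n - 2 then 1
  else 0

/-- The maximally degenerate Lorentzian Weyl tensor
`φ = −(n-3)·(ω¹∧ω^{n-1})² + Σ_{i=2}^{n-2} (ωⁱ∧ω^{n-1})²`. -/
noncomputable def phiLor (n a b c d : ℕ) : ℝ :=
  -((n : ℝ) - 3) * wedgeSq 1 (n - 1) a b c d
    + ∑ i ∈ Finset.Ico 2 (n - 1), wedgeSq i (n - 1) a b c d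

/-- Collapsing a sum against a Kronecker delta. -/
lemma sum_kdelta (s : Finset ℕ) (i : ℕ) (hi : i ∈ s) (f : ℕ → ℝ) :
    ∑ x ∈ s, kdelta i x * f x = f i := by
  rw [Finset.sum_eq_single_of_mem i hi]
  · simp [kdelta]
  · intro b _ hb; simp [kdelta, (Ne.symm hb : i ≠ b)]

/-- The metric written as a combination of Kronecker deltas. -/
lemma gLor_eq (n x y : ℕ) (hn : 4 ≤ n) :
    gLor n x y = kdelta 0 x * kdelta (n-1) y + kdelta (n-1) x * kdelta 0 y
      + (if 1 ≤ x ∧ x ≤ n-2 then (1:ℝ) else 0) * kdelta x y := by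
  unfold gLor kdelta
  split_ifs <;> first | omega | norm_num

/-- Contraction of a bilinear expression with the metric. -/
lemma gcontract (n : ℕ) (hn : 4 ≤ n) (P : ℕ → ℕ → ℝ) :
    ∑ x ∈ Finset.range n, ∑ y ∈ Finset.range n, gLor n x y * P x y
      = P 0 (n-1) + P (n-1) 0 + ∑ x ∈ Finset.Icc 1 (n-2), P x x := by
  have hm : n - 1 ∈ Finset.range n := Finset.mem_range.2 (by omega)
  have h0 : (0:ℕ) ∈ Finset.range n := Finset.mem_range.2 (by omega)
  have step : ∀ x ∈ Finset.range n, ∑ y ∈ Finset.range n, gLor n x y * P x y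
      = kdelta 0 x * P x (n-1) + kdelta (n-1) x * P x 0
        + (if 1 ≤ x ∧ x ≤ n-2 then P x x else 0) := by
    intro x hx
    have e1 : ∑ y ∈ Finset.range n, kdelta (n-1) y * P x y = P x (n-1) :=
      sum_kdelta _ _ hm _
    have e0 : ∑ y ∈ Finset.range n, kdelta 0 y * P x y = P x 0 :=
      sum_kdelta _ _ h0 _
    have e2 : ∑ y ∈ Finset.range n, kdelta x y * P x y = P x x :=
      sum_kdelta _ _ hx _
    calc ∑ y ∈ Finset.range n, gLor n x y * P x y
        = ∑ y ∈ Finset.range n, (kdelta 0 x * (kdelta (n-1) y * P x y)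
            + kdelta (n-1) x * (kdelta 0 y * P x y)
            + (if 1 ≤ x ∧ x ≤ n-2 then (1:ℝ) else 0) * (kdelta x y * P x y)) :=
          Finset.sum_congr rfl (fun y _ => by rw [gLor_eq n x y hn]; ring)
      _ = kdelta 0 x * P x (n-1) + kdelta (n-1) x * P x 0
            + (if 1 ≤ x ∧ x ≤ n-2 then (1:ℝ) else 0) * P x x := by
          rw [Finset.sum_add_distrib, Finset.sum_add_distrib, ← Finset.mul_sum,
            ← Finset.mul_sum, ← Finset.mul_sum, e1, e0, e2]
      _ = _ := by split_ifs <;> ring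
  calc ∑ x ∈ Finset.range n, ∑ y ∈ Finset.range n, gLor n x y * P x y
      = ∑ x ∈ Finset.range n, (kdelta 0 x * P x (n-1) + kdelta (n-1) x * P x 0
          + (if 1 ≤ x ∧ x ≤ n-2 then P x x else 0)) := Finset.sum_congr rfl step
    _ = P 0 (n-1) + P (n-1) 0
          + ∑ x ∈ Finset.range n, (if 1 ≤ x ∧ x ≤ n-2 then P x x else 0) := by
        rw [Finset.sum_add_distrib, Finset.sum_add_distrib,
          sum_kdelta _ _ h0 (fun x => P x (n-1)), sum_kdelta _ _ hm (fun x => P x 0)]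
    _ = _ := by
        congr 1
        rw [← Finset.sum_filter]
        apply Finset.sum_congr _ (fun _ _ => rfl)
        ext z
        simp only [Finset.mem_filter, Finset.mem_range, Finset.mem_Icc]
        omega

/-- Antisymmetry in the first pair. -/
lemma phi_asym1 (n a b c d : ℕ) : phiLor n a b c d = -phiLor n b a c d := by
  simp only [phiLor]
  have h1 : wedgeSq 1 (n-1) b a c d = -wedgeSq 1 (n-1) a b c d := by unfold wedgeSq; ring
  have hs : ∑ i ∈ Finset.Ico 2 (n-1), wedgeSq i (n-1) b a c d
      = ∑ i ∈ Finset.Ico 2 (n-1), -wedgeSq i (n-1) a b c d :=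
    Finset.sum_congr rfl (fun i _ => by unfold wedgeSq; ring)
  rw [h1, hs, Finset.sum_neg_distrib]; ring

/-- Antisymmetry in the second pair. -/
lemma phi_asym2 (n a b c d : ℕ) : phiLor n a b c d = -phiLor n a b d c := by
  simp only [phiLor]
  have h1 : wedgeSq 1 (n-1) a b d c = -wedgeSq 1 (n-1) a b c d := by unfold wedgeSq; ring
  have hs : ∑ i ∈ Finset.Ico 2 (n-1), wedgeSq i (n-1) a b d c
      = ∑ i ∈ Finset.Ico 2 (n-1), -wedgeSq i (n-1) a b c d :=
    Finset.sum_congr rfl (fun i _ => by unfold wedgeSq; ring)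
  rw [h1, hs, Finset.sum_neg_distrib]; ring

/-- Pair-exchange symmetry. -/
lemma phi_pair (n a b c d : ℕ) : phiLor n a b c d = phiLor n c d a b := by
  simp only [phiLor]
  have h1 : wedgeSq 1 (n-1) c d a b = wedgeSq 1 (n-1) a b c d := by unfold wedgeSq; ring
  have hs : ∑ i ∈ Finset.Ico 2 (n-1), wedgeSq i (n-1) c d a b
      = ∑ i ∈ Finset.Ico 2 (n-1), wedgeSq i (n-1) a b c d :=
    Finset.sum_congr rfl (fun i _ => by unfold wedgeSq; ring)
  rw [h1, hs]

/-- First Bianchi identity. -/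
lemma phi_bianchi (n a b c d : ℕ) :
    phiLor n a b c d + phiLor n a c d b + phiLor n a d b c = 0 := by
  simp only [phiLor]
  have h1 : wedgeSq 1 (n-1) a b c d + wedgeSq 1 (n-1) a c d b + wedgeSq 1 (n-1) a d b c = 0 := by
    unfold wedgeSq; ring
  have hs : ∑ i ∈ Finset.Ico 2 (n-1), wedgeSq i (n-1) a b c d
      + ∑ i ∈ Finset.Ico 2 (n-1), wedgeSq i (n-1) a c d b
      + ∑ i ∈ Finset.Ico 2 (n-1), wedgeSq i (n-1) a d b c = 0 := by
    rw [← Finset.sum_add_distrib, ← Finset.sum_add_distrib]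
    exact Finset.sum_eq_zero (fun i _ => by unfold wedgeSq; ring)
  linear_combination (-((n:ℝ) - 3)) * h1 + hs

lemma ws_zero1 (i m b d : ℕ) (hi : i ≠ 0) (hm : m ≠ 0) : wedgeSq i m 0 b m d = 0 := by
  unfold wedgeSq kdelta
  split_ifs <;> first | omega | ring

lemma ws_zero2 (i m b d : ℕ) (hi : i ≠ 0) (hm : m ≠ 0) : wedgeSq i m m b 0 d = 0 := by
  unfold wedgeSq kdelta
  split_ifs <;> first | omega | ring

lemma ws_diag (i m x b d : ℕ) (hx : m ≠ x) :
    wedgeSq i m x b x d = kdelta i x * (kdelta m b * kdelta m d) := by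
  unfold wedgeSq kdelta
  split_ifs <;> first | omega | ring

lemma ws_11 (m : ℕ) (hm : m ≠ 1) : wedgeSq 1 m 1 m 1 m = 1 := by
  unfold wedgeSq kdelta
  split_ifs <;> first | omega | ring

lemma ws_i1 (i m : ℕ) (hi : i ≠ 1) (hm : m ≠ 1) : wedgeSq i m 1 m 1 m = 0 := by
  unfold wedgeSq kdelta
  split_ifs <;> first | omega | ring

lemma phi_zero1 (n b d : ℕ) (hn : 4 ≤ n) : phiLor n 0 b (n-1) d = 0 := by
  simp only [phiLor]
  rw [ws_zero1 1 (n-1) b d (by omega) (by omega),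
    Finset.sum_eq_zero (fun i hi => ws_zero1 i (n-1) b d
      (by have := Finset.mem_Ico.1 hi; omega) (by omega))]
  ring

lemma phi_zero2 (n b d : ℕ) (hn : 4 ≤ n) : phiLor n (n-1) b 0 d = 0 := by
  simp only [phiLor]
  rw [ws_zero2 1 (n-1) b d (by omega) (by omega),
    Finset.sum_eq_zero (fun i hi => ws_zero2 i (n-1) b d
      (by have := Finset.mem_Ico.1 hi; omega) (by omega))]
  ring

lemma phi_diag_sum (n b d : ℕ) (hn : 4 ≤ n) :
    ∑ x ∈ Finset.Icc 1 (n-2), phiLor n x b x d = 0 := by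
  set C : ℝ := kdelta (n-1) b * kdelta (n-1) d with hC
  have hx' : ∀ x ∈ Finset.Icc 1 (n-2), phiLor n x b x d
      = -((n:ℝ)-3) * (kdelta 1 x * C) + ∑ i ∈ Finset.Ico 2 (n-1), kdelta i x * C := by
    intro x hx
    have hne : (n-1) ≠ x := by have := Finset.mem_Icc.1 hx; omega
    simp only [phiLor]
    rw [ws_diag 1 (n-1) x b d hne,
      Finset.sum_congr rfl (fun i _ => ws_diag i (n-1) x b d hne)]
  rw [Finset.sum_congr rfl hx', Finset.sum_add_distrib, ← Finset.mul_sum,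
    sum_kdelta _ 1 (Finset.mem_Icc.2 (by omega)) (fun _ => C), Finset.sum_comm]
  rw [Finset.sum_congr rfl (fun i hi => sum_kdelta _ i
      (Finset.mem_Icc.2 (by have := Finset.mem_Ico.1 hi; omega)) (fun _ => C))]
  rw [Finset.sum_const, Nat.card_Ico, nsmul_eq_mul]
  have : ((n - 1 - 2 : ℕ) : ℝ) = (n:ℝ) - 3 := by
    have h : n - 1 - 2 = n - 3 := by omega
    rw [h, Nat.cast_sub (by omega)]; norm_num
  rw [this]; ring

/-- The (1,3)-trace of `phiLor` vanishes. -/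
lemma trace13 (n : ℕ) (hn : 4 ≤ n) (b d : ℕ) :
    ∑ x ∈ Finset.range n, ∑ y ∈ Finset.range n, gLor n x y * phiLor n x b y d = 0 := by
  rw [gcontract n hn (fun x y => phiLor n x b y d)]
  rw [phi_zero1 n b d hn, phi_zero2 n b d hn, phi_diag_sum n b d hn]
  ring

lemma phi_11 (n : ℕ) (hn : 4 ≤ n) : phiLor n 1 (n-1) 1 (n-1) = -((n:ℝ) - 3) := by
  simp only [phiLor]
  rw [ws_11 (n-1) (by omega),
    Finset.sum_eq_zero (fun i hi => ws_i1 i (n-1)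
      (by have := Finset.mem_Ico.1 hi; omega) (by omega))]
  ring

/-- For every `n ≥ 4`, the tensor `φ = phiLor n` on `ℝ^{1,n-1}` is a nonzero algebraic Weyl
tensor: it satisfies the Riemann symmetries and is totally trace-free with respect to the
Lorentzian metric `gLor n` (whose matrix coincides with its inverse). -/
theorem phiLor_is_nonzero_weyl (n : ℕ) (hn : 4 ≤ n) :
    (∀ a b c d, a < n → b < n → c < n → d < n →
      phiLor n a b c d = -phiLor n b a c d ∧
      phiLor n a b c d = -phiLor n a b d c ∧
      phiLor n a b c d = phiLor n c d a b ∧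
      phiLor n a b c d + phiLor n a c d b + phiLor n a d b c = 0) ∧
    (∀ c d, c < n → d < n →
      ∑ x ∈ Finset.range n, ∑ y ∈ Finset.range n, gLor n x y * phiLor n x y c d = 0) ∧
    (∀ b d, b < n → d < n →
      ∑ x ∈ Finset.range n, ∑ y ∈ Finset.range n, gLor n x y * phiLor n x b y d = 0) ∧
    (∀ b c, b < n → c < n →
      ∑ x ∈ Finset.range n, ∑ y ∈ Finset.range n, gLor n x y * phiLor n x b c y = 0) ∧
    (∀ a d, a < n → d < n →
      ∑ x ∈ Finset.range n, ∑ y ∈ Finset.range n, gLor n x y * phiLor n a x y d = 0) ∧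
    (∀ a c, a < n → c < n →
      ∑ x ∈ Finset.range n, ∑ y ∈ Finset.range n, gLor n x y * phiLor n a x c y = 0) ∧
    (∀ a b, a < n → b < n →
      ∑ x ∈ Finset.range n, ∑ y ∈ Finset.range n, gLor n x y * phiLor n a b x y = 0) ∧
    (∃ a b c d, a < n ∧ b < n ∧ c < n ∧ d < n ∧ phiLor n a b c d ≠ 0) := by
  have hdiag0 : ∀ x c d, phiLor n x x c d = 0 := by
    intro x c d
    have := phi_asym1 n x x c d
    linarith
  have hdiag0' : ∀ a b x, phiLor n a b x x = 0 := by
    intro a b x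
    have := phi_asym2 n a b x x
    linarith
  refine ⟨fun a b c d _ _ _ _ =>
      ⟨phi_asym1 n a b c d, phi_asym2 n a b c d, phi_pair n a b c d, phi_bianchi n a b c d⟩,
    ?_, ?_, ?_, ?_, ?_, ?_, ?_⟩
  · -- trace on slots (1,2)
    intro c d _ _
    rw [gcontract n hn (fun x y => phiLor n x y c d)]
    rw [Finset.sum_eq_zero (fun x _ => hdiag0 x c d),
      phi_asym1 n (n-1) 0 c d]
    ring
  · -- trace on slots (1,3)
    intro b d _ _
    exact trace13 n hn b d
  · -- trace on slots (1,4)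
    intro b c _ _
    have h : ∀ x y, gLor n x y * phiLor n x b c y = -(gLor n x y * phiLor n x b y c) := by
      intro x y
      rw [phi_asym2 n x b y c]; ring
    calc ∑ x ∈ Finset.range n, ∑ y ∈ Finset.range n, gLor n x y * phiLor n x b c y
        = ∑ x ∈ Finset.range n, ∑ y ∈ Finset.range n,
            -(gLor n x y * phiLor n x b y c) :=
          Finset.sum_congr rfl (fun x _ => Finset.sum_congr rfl (fun y _ => h x y))
      _ = -∑ x ∈ Finset.range n, ∑ y ∈ Finset.range n,
            gLor n x y * phiLor n x b y c := by
          simp [Finset.sum_neg_distrib]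
      _ = 0 := by rw [trace13 n hn b c]; ring
  · -- trace on slots (2,3)
    intro a d _ _
    have h : ∀ x y, gLor n x y * phiLor n a x y d = -(gLor n x y * phiLor n x a y d) := by
      intro x y
      rw [phi_asym1 n a x y d]; ring
    calc ∑ x ∈ Finset.range n, ∑ y ∈ Finset.range n, gLor n x y * phiLor n a x y d
        = ∑ x ∈ Finset.range n, ∑ y ∈ Finset.range n,
            -(gLor n x y * phiLor n x a y d) :=
          Finset.sum_congr rfl (fun x _ => Finset.sum_congr rfl (fun y _ => h x y))
      _ = -∑ x ∈ Finset.range n, ∑ y ∈ Finset.range n,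
            gLor n x y * phiLor n x a y d := by
          simp [Finset.sum_neg_distrib]
      _ = 0 := by rw [trace13 n hn a d]; ring
  · -- trace on slots (2,4)
    intro a c _ _
    have h : ∀ x y, gLor n x y * phiLor n a x c y = gLor n x y * phiLor n x a y c := by
      intro x y
      rw [phi_asym1 n a x c y, phi_asym2 n x a c y]; ring
    calc ∑ x ∈ Finset.range n, ∑ y ∈ Finset.range n, gLor n x y * phiLor n a x c y
        = ∑ x ∈ Finset.range n, ∑ y ∈ Finset.range n, gLor n x y * phiLor n x a y c :=
          Finset.sum_congr rfl (fun x _ => Finset.sum_congr rfl (fun y _ => h x y))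
      _ = 0 := trace13 n hn a c
  · -- trace on slots (3,4)
    intro a b _ _
    rw [gcontract n hn (fun x y => phiLor n a b x y)]
    rw [Finset.sum_eq_zero (fun x _ => hdiag0' a b x),
      phi_asym2 n a b (n-1) 0]
    ring
  · -- nonzero
    refine ⟨1, n-1, 1, n-1, by omega, by omega, by omega, by omega, ?_⟩
    rw [phi_11 n hn]
    have h4 : (4:ℝ) ≤ (n:ℝ) := by exact_mod_cast hn
    intro h
    have : (n:ℝ) = 3 := by linarith [neg_eq_zero.1 h]
    linarith
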